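/- Let C be an alternating bilinear form on V. If k₁ + k₂ + k₃ = 0, then the gauge-fixing cochain is (minus) the cyclic sum of C evaluated on Lie brackets: −v₃^C((ξ₁,k₁),(ξ₂,k₂),(ξ₃,k₃)) = C([ξ₁,ξ₂],ξ₃) + C([ξ₃,ξ₁],ξ₂) + C([ξ₂,ξ₃],ξ₁). -/

import Mathlib

namespace Stmt4

variable {V : Type*} [AddCommGroup V] [Module ℝ V]

/-- The momentum-space Lie bracket of modes. -/
def lieMode (B : LinearMap.BilinForm ℝ V) (p q : V × V) : V × V :=
  (B p.1 q.2 • q.1 - B q.1 p.2 • p.1, p.2 + q.2)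

/-- The gauge-fixing cochain `v₃^C` associated to an alternating bilinear form `C`:
`v₃^C = C(ξ₁,ξ₂)(k₃·ξ₃) + C(ξ₂,ξ₃)(k₁·ξ₁) + C(ξ₃,ξ₁)(k₂·ξ₂)`. -/
def v₃C (B C : LinearMap.BilinForm ℝ V) (p q r : V × V) : ℝ :=
  C p.1 q.1 * B r.2 r.1 + C q.1 r.1 * B p.2 p.1 + C r.1 p.1 * B q.2 q.1

theorem apply_lieMode_fst (B C : LinearMap.BilinForm ℝ V) (p q : V × V) (z : V) :
    C (lieMode B p q).1 z = B p.1 q.2 * C q.1 z - B q.1 p.2 * C p.1 z := by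
  simp [lieMode]

/-- The coefficient of `C(ξ₂,ξ₃)` on the left is `B(ξ₁, k₂ + k₃)` from the brackets plus
`B(k₁, ξ₁)` from `v₃^C`; cyclically for the other two. -/
theorem cyclic_sum_add_v₃C {B C : LinearMap.BilinForm ℝ V} (hB : B.IsSymm) (hC : C.IsAlt)
    (ξ₁ k₁ ξ₂ k₂ ξ₃ k₃ : V) :
    C (lieMode B (ξ₁, k₁) (ξ₂, k₂)).1 ξ₃ + C (lieMode B (ξ₃, k₃) (ξ₁, k₁)).1 ξ₂
        + C (lieMode B (ξ₂, k₂) (ξ₃, k₃)).1 ξ₁ + v₃C B C (ξ₁, k₁) (ξ₂, k₂) (ξ₃, k₃)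
      = C ξ₂ ξ₃ * B ξ₁ (k₁ + k₂ + k₃) + C ξ₃ ξ₁ * B ξ₂ (k₁ + k₂ + k₃)
        + C ξ₁ ξ₂ * B ξ₃ (k₁ + k₂ + k₃) := by
  simp only [apply_lieMode_fst, v₃C, map_add]
  rw [hB.eq k₁ ξ₁, hB.eq k₂ ξ₂, hB.eq k₃ ξ₃]
  linear_combination B ξ₁ k₃ * hC.neg_eq ξ₂ ξ₃ + B ξ₂ k₁ * hC.neg_eq ξ₃ ξ₁
    + B ξ₃ k₂ * hC.neg_eq ξ₁ ξ₂

/-- If `k₁ + k₂ + k₃ = 0`, then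
`−v₃^C = C([ξ₁,ξ₂],ξ₃) + C([ξ₃,ξ₁],ξ₂) + C([ξ₂,ξ₃],ξ₁)`. -/
theorem v₃C_eq_cyclic_sum (B : LinearMap.BilinForm ℝ V) (hB : B.IsSymm)
    (C : LinearMap.BilinForm ℝ V) (hC : C.IsAlt)
    (ξ₁ k₁ ξ₂ k₂ ξ₃ k₃ : V) (h : k₁ + k₂ + k₃ = 0) :
    -v₃C B C (ξ₁, k₁) (ξ₂, k₂) (ξ₃, k₃)
      = C (lieMode B (ξ₁, k₁) (ξ₂, k₂)).1 ξ₃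
        + C (lieMode B (ξ₃, k₃) (ξ₁, k₁)).1 ξ₂
        + C (lieMode B (ξ₂, k₂) (ξ₃, k₃)).1 ξ₁ := by
  have defect := cyclic_sum_add_v₃C hB hC ξ₁ k₁ ξ₂ k₂ ξ₃ k₃
  rw [h, map_zero, map_zero, map_zero] at defect
  linarith

end Stmt4
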